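/- arXiv:2310.16365 — 4 statements merged into one kernel-verified Lean document; each statement's English description precedes it below -/
import Mathlib

section
/- For all w, x, y ∈ V and every j ∈ {1,…,N}: if Φ_{w,j}(x) = Φ_{w,j}(y) then there exist h1, h2 ∈ G with ⟨w, U_{h1}x − U_{h2}y⟩ = 0; i.e., the set F_{x,y,j} = {w ∈ V : Φ_{w,j}(x) = Φ_{w,j}(y)} is contained in ⋃_{h1,h2∈G} {U_{h1}x − U_{h2}y}^⊥. Moreover, if x ≁ y then U_{h1}x − U_{h2}y ≠ 0 for all h1, h2 ∈ G, so each set {U_{h1}x − U_{h2}y}^⊥ in this union is a linear subspace of dimension d − 1. -/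
/-!
Every coorbit value `Φ_{w,j}(x)` is one of the numbers `⟪U_g w, x⟫ = ⟪w, U_{g⁻¹} x⟫`, so equal
coorbit values of `x` and `y` give `⟪w, U_{h₁} x⟫ = ⟪w, U_{h₂} y⟫`. If `U_{h₁} x = U_{h₂} y`, then
`U_{h₂⁻¹ h₁}` maps `x` to `y`; so for `x ≁ y` the difference is a nonzero vector and its orthogonal
complement is a hyperplane.
-/

open scoped RealInnerProductSpace
open MeasureTheory

/-- `coorbit U w x j` is the `j`-th largest entry (with multiplicity, `1 ≤ j ≤ N = |G|`)
of the `N`-tuple `(⟨U_g w, x⟩)_{g ∈ G}`. -/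
noncomputable def coorbit {d : ℕ} {G : Type} [Group G] [Fintype G]
    (U : G →* (EuclideanSpace ℝ (Fin d) ≃ₗᵢ[ℝ] EuclideanSpace ℝ (Fin d)))
    (w x : EuclideanSpace ℝ (Fin d)) (j : ℕ) : ℝ :=
  ((Finset.univ.val.map fun g : G => ⟪(U g) w, x⟫).sort (· ≤ ·)).getD (Fintype.card G - j) 0

/-- `dhat U x y = min_{g ∈ G} ‖x − U_g y‖`, the orbit distance. -/
noncomputable def dhat {d : ℕ} {G : Type} [Group G] [Fintype G]
    (U : G →* (EuclideanSpace ℝ (Fin d) ≃ₗᵢ[ℝ] EuclideanSpace ℝ (Fin d)))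
    (x y : EuclideanSpace ℝ (Fin d)) : ℝ :=
  Finset.univ.inf' Finset.univ_nonempty fun g : G => ‖x - (U g) y‖

section

variable {d : ℕ} {G : Type} [Group G]
  (U : G →* (EuclideanSpace ℝ (Fin d) ≃ₗᵢ[ℝ] EuclideanSpace ℝ (Fin d)))

theorem apply_sub_apply_ne_zero {x y : EuclideanSpace ℝ (Fin d)} (hxy : ¬∃ g : G, (U g) x = y)
    (h₁ h₂ : G) : (U h₁) x - (U h₂) y ≠ 0 := by
  intro h
  refine hxy ⟨h₂⁻¹ * h₁, ?_⟩
  rw [map_mul, map_inv, LinearIsometryEquiv.coe_mul, Function.comp_apply, sub_eq_zero.mp h]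
  exact (U h₂).symm_apply_apply y

variable [Fintype G]

theorem exists_coorbit_eq_inner (w x : EuclideanSpace ℝ (Fin d)) {j : ℕ} (hj : 1 ≤ j) :
    ∃ g : G, coorbit U w x j = ⟪w, (U g) x⟫ := by
  set l := (Finset.univ.val.map fun g : G => ⟪(U g) w, x⟫).sort (· ≤ ·)
  have hlen : l.length = Fintype.card G := by
    rw [Multiset.length_sort, Multiset.card_map]; rfl
  -- for `j > |G|` the truncated index is `0`, which is still in range
  have hlt : Fintype.card G - j < l.length := by
    rw [hlen]; have := Fintype.card_pos (α := G); omega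
  have hmem := List.getElem_mem hlt
  rw [Multiset.mem_sort, Multiset.mem_map] at hmem
  obtain ⟨g, -, hg⟩ := hmem
  refine ⟨g⁻¹, ?_⟩
  rw [coorbit, List.getD_eq_getElem _ _ hlt, ← hg, map_inv]
  exact (U g).inner_map_eq_flip w x

theorem exists_inner_sub_eq_zero_of_coorbit_eq {w x y : EuclideanSpace ℝ (Fin d)} {j : ℕ}
    (hj : 1 ≤ j) (h : coorbit U w x j = coorbit U w y j) :
    ∃ h₁ h₂ : G, ⟪w, (U h₁) x - (U h₂) y⟫ = 0 := by
  obtain ⟨h₁, hx⟩ := exists_coorbit_eq_inner U w x hj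
  obtain ⟨h₂, hy⟩ := exists_coorbit_eq_inner U w y hj
  exact ⟨h₁, h₂, by rw [inner_sub_right, ← hx, ← hy, h, sub_self]⟩

end

theorem finrank_orthogonal_span_singleton_eq_sub_one {𝕜 E : Type*} [RCLike 𝕜]
    [NormedAddCommGroup E] [InnerProductSpace 𝕜 E] [FiniteDimensional 𝕜 E] {v : E}
    (hv : v ≠ 0) : Module.finrank 𝕜 (𝕜 ∙ v)ᗮ = Module.finrank 𝕜 E - 1 := by
  have := Submodule.finrank_add_finrank_orthogonal (𝕜 ∙ v)
  rw [finrank_span_singleton hv] at this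
  omega

theorem stmt4_general {d : ℕ} {G : Type} [Group G] [Fintype G]
    (U : G →* (EuclideanSpace ℝ (Fin d) ≃ₗᵢ[ℝ] EuclideanSpace ℝ (Fin d))) :
    (∀ (w x y : EuclideanSpace ℝ (Fin d)) (j : ℕ), 1 ≤ j → j ≤ Fintype.card G →
      coorbit U w x j = coorbit U w y j →
      ∃ h1 h2 : G, ⟪w, (U h1) x - (U h2) y⟫ = 0) ∧
    (∀ x y : EuclideanSpace ℝ (Fin d), ¬(∃ g : G, (U g) x = y) →
      ∀ h1 h2 : G, (U h1) x - (U h2) y ≠ 0 ∧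
        Module.finrank ℝ ((Submodule.span ℝ {(U h1) x - (U h2) y})ᗮ) = d - 1) := by
  refine ⟨fun w x y j hj _ h ↦ exists_inner_sub_eq_zero_of_coorbit_eq U hj h,
    fun x y hxy h₁ h₂ ↦ ?_⟩
  have hne := apply_sub_apply_ne_zero U hxy h₁ h₂
  refine ⟨hne, ?_⟩
  rw [finrank_orthogonal_span_singleton_eq_sub_one hne, finrank_euclideanSpace_fin]

/-- if `Φ_{w,j}(x) = Φ_{w,j}(y)` then `w ⟂ (U_{h₁}x − U_{h₂}y)` for some
`h₁, h₂ ∈ G`; i.e. `F_{x,y,j} ⊆ ⋃_{h₁,h₂} {U_{h₁}x − U_{h₂}y}^⊥`.  Moreover if `x ≁ y`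
then each vector `U_{h₁}x − U_{h₂}y` is nonzero, so each `{U_{h₁}x − U_{h₂}y}^⊥` is a
linear subspace of dimension `d − 1`. -/
theorem stmt4 {d : ℕ} (hd : 2 ≤ d) {G : Type} [Group G] [Fintype G]
    (U : G →* (EuclideanSpace ℝ (Fin d) ≃ₗᵢ[ℝ] EuclideanSpace ℝ (Fin d))) :
    (∀ (w x y : EuclideanSpace ℝ (Fin d)) (j : ℕ), 1 ≤ j → j ≤ Fintype.card G →
      coorbit U w x j = coorbit U w y j →
      ∃ h1 h2 : G, ⟪w, (U h1) x - (U h2) y⟫ = 0) ∧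
    (∀ x y : EuclideanSpace ℝ (Fin d), ¬(∃ g : G, (U g) x = y) →
      ∀ h1 h2 : G, (U h1) x - (U h2) y ≠ 0 ∧
        Module.finrank ℝ ((Submodule.span ℝ {(U h1) x - (U h2) y})ᗮ) = d - 1) :=
  stmt4_general U
end

section
/- Let A be a finite G-invariant subset of V (i.e., U_g x ∈ A for all x ∈ A, g ∈ G). Define W = ⋃_{x,y∈A, x≁y} ⋃_{h1,h2∈G} {U_{h1}x − U_{h2}y}^⊥. Then W is a finite union of proper linear subspaces of V (each of dimension at most d − 1); consequently W is closed, nowhere dense, and has Lebesgue measure zero. Furthermore, for every w ∈ V \\ W and every j ∈ {1,…,N}, the map Φ_{w,j} separates G-orbits in A: for all x, y ∈ A, Φ_{w,j}(x) = Φ_{w,j}(y) implies x ∼ y. -/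
open scoped RealInnerProductSpace
open MeasureTheory

lemma flip_inner {d : ℕ} {G : Type} [Group G] [Fintype G]
    (U : G →* (EuclideanSpace ℝ (Fin d) ≃ₗᵢ[ℝ] EuclideanSpace ℝ (Fin d)))
    (g : G) (w x : EuclideanSpace ℝ (Fin d)) :
    ⟪(U g) w, x⟫ = ⟪(U g⁻¹) x, w⟫ := by
  rw [LinearIsometryEquiv.inner_map_eq_flip, real_inner_comm]
  congr 1
  rw [map_inv]
  rfl

lemma coorbit_mem {d : ℕ} {G : Type} [Group G] [Fintype G]
    (U : G →* (EuclideanSpace ℝ (Fin d) ≃ₗᵢ[ℝ] EuclideanSpace ℝ (Fin d)))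
    (w x : EuclideanSpace ℝ (Fin d)) {j : ℕ} (hj1 : 1 ≤ j) (hj2 : j ≤ Fintype.card G) :
    ∃ g : G, coorbit U w x j = ⟪(U g) w, x⟫ := by
  set M : Multiset ℝ := Finset.univ.val.map fun g : G => ⟪(U g) w, x⟫ with hM
  have hlen : (M.sort (· ≤ ·)).length = Fintype.card G := by
    rw [Multiset.length_sort, hM, Multiset.card_map]
    rfl
  have hidx : Fintype.card G - j < (M.sort (· ≤ ·)).length := by
    rw [hlen]; omega
  have : coorbit U w x j = (M.sort (· ≤ ·)).get ⟨_, hidx⟩ := by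
    rw [coorbit, List.getD_eq_getElem _ _ hidx]
    rfl
  have hmem : coorbit U w x j ∈ M := by
    rw [this, ← Multiset.mem_sort (· ≤ ·)]
    exact List.get_mem _ _
  rw [hM, Multiset.mem_map] at hmem
  obtain ⟨g, -, hg⟩ := hmem
  exact ⟨g, hg.symm⟩

/-- for a finite `G`-invariant subset `A ⊆ V`, the "bad set"
`W = ⋃_{x,y ∈ A, x ≁ y} ⋃_{h₁,h₂ ∈ G} {U_{h₁}x − U_{h₂}y}^⊥` is a finite union of linear
subspaces of dimension at most `d − 1`; consequently it is closed, nowhere dense, and has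
Lebesgue measure zero.  Moreover every `w ∉ W` and every `j ∈ {1,…,N}` give a coorbit map
`Φ_{w,j}` that separates the `G`-orbits in `A`. -/
theorem stmt5 {d : ℕ} (hd : 2 ≤ d) {G : Type} [Group G] [Fintype G]
    (U : G →* (EuclideanSpace ℝ (Fin d) ≃ₗᵢ[ℝ] EuclideanSpace ℝ (Fin d)))
    (A : Finset (EuclideanSpace ℝ (Fin d)))
    (hA : ∀ x ∈ A, ∀ g : G, (U g) x ∈ A)
    (W : Set (EuclideanSpace ℝ (Fin d)))
    (hW : W = {w : EuclideanSpace ℝ (Fin d) | ∃ x ∈ A, ∃ y ∈ A,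
      (¬∃ g : G, (U g) x = y) ∧ ∃ h1 h2 : G, ⟪(U h1) x - (U h2) y, w⟫ = 0}) :
    (∃ (k : ℕ) (Ws : Fin k → Submodule ℝ (EuclideanSpace ℝ (Fin d))),
      (∀ i, Module.finrank ℝ (Ws i) ≤ d - 1) ∧ W = ⋃ i, (Ws i : Set _)) ∧
    IsClosed W ∧ IsNowhereDense W ∧ volume W = 0 ∧
    (∀ w ∉ W, ∀ (j : ℕ), 1 ≤ j → j ≤ Fintype.card G →
      ∀ x ∈ A, ∀ y ∈ A, coorbit U w x j = coorbit U w y j → ∃ g : G, (U g) x = y) := by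
  classical
  -- the finite set of bad vectors
  set P : Finset (EuclideanSpace ℝ (Fin d) × EuclideanSpace ℝ (Fin d) × G × G) :=
    (A ×ˢ A ×ˢ (Finset.univ : Finset G) ×ˢ (Finset.univ : Finset G)).filter
      (fun p => ¬∃ g : G, (U g) p.1 = p.2.1) with hP
  set T : Finset (EuclideanSpace ℝ (Fin d)) := P.image (fun p => (U p.2.2.1) p.1 - (U p.2.2.2) p.2.1) with hT
  have hTne : ∀ v ∈ T, v ≠ 0 := by
    intro v hv
    rw [hT, Finset.mem_image] at hv
    obtain ⟨⟨x, y, h1, h2⟩, hp, rfl⟩ := hv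
    rw [hP, Finset.mem_filter] at hp
    intro hzero
    apply hp.2
    refine ⟨h2⁻¹ * h1, ?_⟩
    have : (U h1) x = (U h2) y := by
      have := sub_eq_zero.mp hzero
      exact this
    calc (U (h2⁻¹ * h1)) x = (U h2⁻¹) ((U h1) x) := by rw [map_mul]; rfl
      _ = (U h2⁻¹) ((U h2) y) := by rw [this]
      _ = y := by
          rw [map_inv]
          exact (U h2).symm_apply_apply y
  have hWmem : ∀ w : EuclideanSpace ℝ (Fin d), w ∈ W ↔ ∃ v ∈ T, ⟪v, w⟫ = 0 := by
    intro w
    rw [hW]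
    constructor
    · rintro ⟨x, hx, y, hy, hne, h1, h2, hinner⟩
      refine ⟨(U h1) x - (U h2) y, ?_, hinner⟩
      rw [hT, Finset.mem_image]
      refine ⟨(x, y, h1, h2), ?_, rfl⟩
      rw [hP, Finset.mem_filter]
      exact ⟨by simp [Finset.mem_product, hx, hy], hne⟩
    · rintro ⟨v, hv, hinner⟩
      rw [hT, Finset.mem_image] at hv
      obtain ⟨⟨x, y, h1, h2⟩, hp, rfl⟩ := hv
      rw [hP, Finset.mem_filter] at hp
      have hxy := hp.1
      simp only [Finset.mem_product] at hxy
      exact ⟨x, hxy.1, y, hxy.2.1, hp.2, h1, h2, hinner⟩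
  -- the family of hyperplanes
  set Ws : Fin T.card → Submodule ℝ (EuclideanSpace ℝ (Fin d)) :=
    fun i => (ℝ ∙ ((T.equivFin.symm i : EuclideanSpace ℝ (Fin d))))ᗮ with hWs
  have hrank0 : ∀ i, Module.finrank ℝ
      ((ℝ ∙ ((T.equivFin.symm i : EuclideanSpace ℝ (Fin d))))ᗮ) = d - 1 := by
    intro i
    have hv : ((T.equivFin.symm i : EuclideanSpace ℝ (Fin d))) ≠ 0 := hTne _ (T.equivFin.symm i).2
    have h1 : Module.finrank ℝ (ℝ ∙ ((T.equivFin.symm i : EuclideanSpace ℝ (Fin d)))) = 1 :=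
      finrank_span_singleton hv
    have h2 := Submodule.finrank_add_finrank_orthogonal
      (K := (ℝ ∙ ((T.equivFin.symm i : EuclideanSpace ℝ (Fin d)))))
    rw [h1, finrank_euclideanSpace_fin] at h2
    omega
  have hrank : ∀ i, Module.finrank ℝ (Ws i) = d - 1 := hrank0
  have hWeq : W = ⋃ i, (Ws i : Set (EuclideanSpace ℝ (Fin d))) := by
    ext w
    rw [hWmem, Set.mem_iUnion]
    constructor
    · rintro ⟨v, hv, hinner⟩
      refine ⟨T.equivFin ⟨v, hv⟩, ?_⟩
      rw [hWs]
      simp only [Equiv.symm_apply_apply]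
      rw [SetLike.mem_coe, Submodule.mem_orthogonal_singleton_iff_inner_left]
      rw [real_inner_comm]; exact hinner
    · rintro ⟨i, hi⟩
      refine ⟨(T.equivFin.symm i : EuclideanSpace ℝ (Fin d)), (T.equivFin.symm i).2, ?_⟩
      rw [SetLike.mem_coe, Submodule.mem_orthogonal_singleton_iff_inner_left] at hi
      rw [real_inner_comm]; exact hi
  have hne_top : ∀ i, Ws i ≠ ⊤ := by
    intro i htop
    have := hrank i
    rw [htop, finrank_top, finrank_euclideanSpace_fin] at this
    omega
  have hclosed : IsClosed W := by
    rw [hWeq]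
    exact isClosed_iUnion_of_finite fun i => (Ws i).closed_of_finiteDimensional
  have hvol : volume W = 0 := by
    rw [hWeq]
    refine le_antisymm (le_trans (measure_iUnion_le _) ?_) zero_le
    simp only [Measure.addHaar_submodule volume _ (hne_top _)]
    simp
  have hnwd : IsNowhereDense W := by
    rw [IsNowhereDense, hclosed.closure_eq]
    by_contra hne
    obtain ⟨w, hw⟩ := Set.nonempty_iff_ne_empty.mpr hne
    have hpos : 0 < volume (interior W) :=
      (isOpen_interior).measure_pos volume ⟨w, hw⟩
    have : volume (interior W) = 0 :=
      measure_mono_null interior_subset hvol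
    rw [this] at hpos
    exact lt_irrefl 0 hpos
  refine ⟨⟨T.card, Ws, fun i => le_of_eq (hrank i), hWeq⟩, hclosed, hnwd, hvol, ?_⟩
  intro w hw j hj1 hj2 x hx y hy heq
  by_contra hne
  apply hw
  obtain ⟨g, hg⟩ := coorbit_mem U w x hj1 hj2
  obtain ⟨h, hh⟩ := coorbit_mem U w y hj1 hj2
  rw [hW]
  refine ⟨x, hx, y, hy, hne, g⁻¹, h⁻¹, ?_⟩
  rw [inner_sub_left, sub_eq_zero, ← flip_inner, ← flip_inner, ← hg, ← hh]
  exact heq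
end

section
/- For all w, x, y ∈ V and every j ∈ {1,…,N}: |Φ_{w,j}(x) − Φ_{w,j}(y)| ≤ ‖w‖ · d̂(x,y). In other words, for fixed w, the map x ↦ Φ_{w,j}(x) is Lipschitz with constant ‖w‖ with respect to the orbit distance d̂. -/
open scoped RealInnerProductSpace
open MeasureTheory

-- countP monotone under Rel
lemma countP_mono_rel {α β : Type*} (p : α → Prop) (q : β → Prop) [DecidablePred p]
    [DecidablePred q] {r : α → β → Prop} {s : Multiset α} {t : Multiset β}
    (h : Multiset.Rel r s t) (himp : ∀ a b, r a b → q b → p a) :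
    t.countP q ≤ s.countP p := by
  induction h with
  | zero => simp
  | @cons a b s t hab hst ih =>
    rw [Multiset.countP_cons, Multiset.countP_cons]
    by_cases hq : q b
    · simp [hq, himp a b hab hq]; omega
    · simp [hq]; omega

-- forward: getD k ≤ v → k < countP (· ≤ v)
lemma lt_countP_of_getD_le {l : List ℝ} (hl : l.Pairwise (· ≤ ·)) {k : ℕ} (hk : k < l.length)
    {v : ℝ} (h : l.getD k 0 ≤ v) : k < l.countP (fun a => a ≤ v) := by
  rw [List.getD_eq_getElem l 0 hk] at h
  have hmono : ∀ i (hi : i < l.length), i ≤ k → l[i] ≤ v := by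
    intro i hi hik
    rcases eq_or_lt_of_le hik with rfl | hlt
    · exact h
    · exact le_trans (List.pairwise_iff_getElem.mp hl i k hi hk hlt) h
  have : l.countP (fun a => a ≤ v) = (l.take (k+1)).countP (fun a => a ≤ v)
      + (l.drop (k+1)).countP (fun a => a ≤ v) := by
    rw [← List.countP_append, List.take_append_drop]
  rw [this]
  have htake : (l.take (k+1)).countP (fun a => a ≤ v) = (l.take (k+1)).length := by
    rw [List.countP_eq_length]
    intro a ha
    obtain ⟨i, hi, rfl⟩ := List.mem_take_iff_getElem.mp ha
    simp only [decide_eq_true_eq]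
    exact hmono i _ (by omega)
  have : (l.take (k+1)).length = k+1 := by
    rw [List.length_take]; omega
  omega

-- backward: k < countP (· ≤ v) → getD k ≤ v
lemma getD_le_of_lt_countP {l : List ℝ} (hl : l.Pairwise (· ≤ ·)) {k : ℕ} (hk : k < l.length)
    {v : ℝ} (h : k < l.countP (fun a => a ≤ v)) : l.getD k 0 ≤ v := by
  rw [List.getD_eq_getElem l 0 hk]
  by_contra hv
  push_neg at hv
  have hdrop : (l.drop k).countP (fun a => a ≤ v) = 0 := by
    rw [List.countP_eq_zero]
    intro a ha
    obtain ⟨i, hi, rfl⟩ := List.mem_iff_getElem.mp ha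
    have hi' : k + i < l.length := by
      have := hi; rw [List.length_drop] at this; omega
    rw [List.getElem_drop]
    simp only [decide_eq_true_eq, not_le]
    rcases Nat.eq_zero_or_pos i with rfl | hipos
    · simpa using hv
    · exact lt_of_lt_of_le hv ((List.pairwise_iff_getElem.mp hl k (k+i)
        hk hi' (by omega)))
  have hsplit : l.countP (fun a => a ≤ v) = (l.take k).countP (fun a => a ≤ v)
      + (l.drop k).countP (fun a => a ≤ v) := by
    rw [← List.countP_append, List.take_append_drop]
  have := List.countP_le_length (l := l.take k) (p := fun a => decide (a ≤ v))
  rw [List.length_take] at this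
  omega

lemma sorted_getD_le {s t : Multiset ℝ} {c : ℝ}
    (h : Multiset.Rel (fun a b => a ≤ b + c) s t) {k : ℕ} (hk : k < Multiset.card s) :
    (s.sort (· ≤ ·)).getD k 0 ≤ (t.sort (· ≤ ·)).getD k 0 + c := by
  have hcard := Multiset.card_eq_card_of_rel h
  set v := (t.sort (· ≤ ·)).getD k 0 with hv
  have h1 : k < (t.sort (· ≤ ·)).countP (fun a => a ≤ v) :=
    lt_countP_of_getD_le (Multiset.pairwise_sort t _)
      (by rw [Multiset.length_sort]; omega) le_rfl
  have e1 : ((t.sort (· ≤ ·)).countP fun a => a ≤ v) = t.countP (fun a => a ≤ v) := by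
    conv_rhs => rw [← Multiset.sort_eq t (· ≤ ·)]
    rw [Multiset.coe_countP]
  have e2 : ((s.sort (· ≤ ·)).countP fun a => a ≤ v + c) = s.countP (fun a => a ≤ v + c) := by
    conv_rhs => rw [← Multiset.sort_eq s (· ≤ ·)]
    rw [Multiset.coe_countP]
  have h2 : t.countP (fun a => a ≤ v) ≤ s.countP (fun a => a ≤ v + c) :=
    countP_mono_rel _ _ h (fun a b hab hb => le_trans hab (by linarith))
  exact getD_le_of_lt_countP (Multiset.pairwise_sort s _)
    (by rw [Multiset.length_sort]; omega) (by omega)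

lemma sorted_getD_abs_le {s t : Multiset ℝ} {c : ℝ}
    (h : Multiset.Rel (fun a b => |a - b| ≤ c) s t) {k : ℕ} (hk : k < Multiset.card s) :
    |(s.sort (· ≤ ·)).getD k 0 - (t.sort (· ≤ ·)).getD k 0| ≤ c := by
  have hcard := Multiset.card_eq_card_of_rel h
  have h1 : (s.sort (· ≤ ·)).getD k 0 ≤ (t.sort (· ≤ ·)).getD k 0 + c :=
    sorted_getD_le (h.mono fun a _ b _ hab => by
      have := abs_le.mp hab; linarith) hk
  have h2 : (t.sort (· ≤ ·)).getD k 0 ≤ (s.sort (· ≤ ·)).getD k 0 + c := by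
    refine sorted_getD_le ?_ (by omega)
    rw [← Multiset.rel_flip] at h
    exact h.mono fun a _ b _ hab => by
      simp only [flip] at hab ⊢
      have := abs_le.mp hab; linarith
  rw [abs_le]; constructor <;> linarith

/-- each coorbit map `Φ_{w,j}` is Lipschitz with constant `‖w‖` with respect
to the orbit distance `d̂`: `|Φ_{w,j}(x) − Φ_{w,j}(y)| ≤ ‖w‖ · d̂(x,y)`. -/
theorem stmt7 {d : ℕ} (hd : 2 ≤ d) {G : Type} [Group G] [Fintype G]
    (U : G →* (EuclideanSpace ℝ (Fin d) ≃ₗᵢ[ℝ] EuclideanSpace ℝ (Fin d)))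
    (w x y : EuclideanSpace ℝ (Fin d)) (j : ℕ) (hj1 : 1 ≤ j) (hjN : j ≤ Fintype.card G) :
    |coorbit U w x j - coorbit U w y j| ≤ ‖w‖ * dhat U x y := by
  obtain ⟨g₀, -, hg₀⟩ := Finset.exists_mem_eq_inf' (Finset.univ_nonempty)
    (fun g : G => ‖x - (U g) y‖)
  have hdhat : dhat U x y = ‖x - (U g₀) y‖ := hg₀
  set c := ‖w‖ * ‖x - (U g₀) y‖ with hc
  have hMy : (Finset.univ.val.map fun g : G => ⟪(U g) w, y⟫)
      = (Finset.univ.val.map fun g : G => ⟪(U g) w, (U g₀) y⟫) := by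
    have e : ∀ g : G, ⟪(U g) w, (U g₀) y⟫ = ⟪(U (g₀⁻¹ * g)) w, y⟫ := by
      intro g
      have h1 : (U g₀) ((U (g₀⁻¹ * g)) w) = (U g) w := by
        have h2 := map_mul U g₀ (g₀⁻¹ * g)
        rw [mul_inv_cancel_left] at h2
        rw [h2]; rfl
      rw [← h1, LinearIsometryEquiv.inner_map_map]
    simp_rw [e]
    have h3 : Finset.univ.val.map (fun g : G => ⟪(U (g₀⁻¹ * g)) w, y⟫)
        = (Finset.univ.val.map (fun g : G => g₀⁻¹ * g)).map (fun g : G => ⟪(U g) w, y⟫) := by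
      rw [Multiset.map_map]; rfl
    rw [h3]
    congr 1
    have h4 := Finset.map_univ_equiv (Equiv.mulLeft g₀⁻¹)
    have h5 := congrArg Finset.val h4
    rw [Finset.map_val] at h5
    exact h5.symm
  have hrel : Multiset.Rel (fun a b => |a - b| ≤ c)
      (Finset.univ.val.map fun g : G => ⟪(U g) w, x⟫)
      (Finset.univ.val.map fun g : G => ⟪(U g) w, (U g₀) y⟫) := by
    rw [Multiset.rel_map]
    apply Multiset.rel_refl_of_refl_on
    intro g _
    have h6 : ⟪(U g) w, x⟫ - ⟪(U g) w, (U g₀) y⟫ = ⟪(U g) w, x - (U g₀) y⟫ := by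
      rw [inner_sub_right]
    rw [h6, hc]
    calc |⟪(U g) w, x - (U g₀) y⟫| ≤ ‖(U g) w‖ * ‖x - (U g₀) y‖ := abs_real_inner_le_norm _ _
    _ = ‖w‖ * ‖x - (U g₀) y‖ := by rw [(U g).norm_map]
  have hN : 1 ≤ Fintype.card G := le_trans hj1 hjN
  unfold coorbit
  rw [hMy, hdhat]
  refine sorted_getD_abs_le hrel ?_
  rw [Multiset.card_map]
  simp only [Finset.card_val, Finset.card_univ]
  omega
end

section
/- Let E_G = {λ ∈ ℝ : λ is a real eigenvalue of U_g for some g ∈ G}. For g ∈ G let r(g) = min_{λ∈ℝ} rank(U_g − λI), let γ_1 ≥ … ≥ γ_{N−1} be the decreasing rearrangement of {r(g) : g ∈ G, g ≠ 1}, and set p_n = 2d − γ_{N−n+1} for 2 ≤ n ≤ N−1. Let a, b ∈ G^n be n-tuples of pairwise distinct group elements. Then the set Γ³ = {(x,y) ∈ V × V : ∃ (c_1,…,c_{n−1}) ∈ E_G^{n−1} such that U_{a(1)}x − U_{b(1)}y − c_i (U_{a(i+1)}x − U_{b(i+1)}y) = 0 for all i ∈ {1,…,n−1}} is a finite union of linear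 subspaces of V × V, each of dimension at most p_n = 2d − γ_{N−n+1}. -/
open scoped RealInnerProductSpace
open MeasureTheory

/-- `rankMin U g = min_{λ ∈ ℝ} rank (U_g − λ I)` (the minimum of the set of possible
ranks, which is attained since ranks are natural numbers). -/
noncomputable def rankMin {d : ℕ} {G : Type} [Group G] [Fintype G]
    (U : G →* (EuclideanSpace ℝ (Fin d) ≃ₗᵢ[ℝ] EuclideanSpace ℝ (Fin d))) (g : G) : ℕ :=
  sInf {k : ℕ | ∃ c : ℝ, Module.finrank ℝ (LinearMap.range
    (((U g).toLinearEquiv : EuclideanSpace ℝ (Fin d) →ₗ[ℝ] EuclideanSpace ℝ (Fin d))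
      - c • LinearMap.id)) = k}

/-- The increasingly sorted list of the multiset `{rankMin U g : g ∈ G, g ≠ 1}`.  The
`k`-th largest element `γ_k` (`1 ≤ k ≤ N−1`) of this multiset is
`(gammaSorted U).getD (N - 1 - k) 0`; in particular `γ_{N−n+1} = (gammaSorted U).getD (n-2) 0`. -/
noncomputable def gammaSorted {d : ℕ} {G : Type} [Group G] [Fintype G] [DecidableEq G]
    (U : G →* (EuclideanSpace ℝ (Fin d) ≃ₗᵢ[ℝ] EuclideanSpace ℝ (Fin d))) : List ℕ :=
  ((Finset.univ.filter fun g : G => g ≠ 1).val.map (rankMin U)).sort (· ≤ ·)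

theorem mylem1 (l : List ℕ) (hs : l.Pairwise (· ≤ ·)) (k : ℕ) (hk : k < l.length) :
    l.countP (fun x => decide (x < l.getD k 0)) ≤ k := by
  have hsplit := List.take_append_drop k l
  calc l.countP (fun x => decide (x < l.getD k 0))
      = ((l.take k) ++ (l.drop k)).countP _ := by rw [hsplit]
    _ = (l.take k).countP _ + (l.drop k).countP (fun x => decide (x < l.getD k 0)) :=
        List.countP_append
    _ ≤ k + 0 := by
        apply Nat.add_le_add
        · exact le_trans List.countP_le_length (by simp)
        · apply Nat.le_of_eq
          rw [List.countP_eq_zero]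
          intro x hx
          simp only [decide_eq_true_eq, not_lt]
          obtain ⟨j, hj, rfl⟩ := List.getElem_of_mem hx
          have hj' : k + j < l.length := by
            have := List.length_drop (i := k) (l := l); omega
          rw [List.getElem_drop]
          rw [List.getD_eq_getElem l 0 hk]
          have := hs.rel_get_of_le (a := ⟨k, hk⟩) (b := ⟨k+j, hj'⟩) (by simp [Fin.le_def])
          simpa using this
    _ = k := by omega

theorem mylem2 (s t : Multiset ℕ) (hts : t ≤ s) (k : ℕ) (hk : k < Multiset.card t) :
    ∃ x ∈ t, (s.sort (· ≤ ·)).getD k 0 ≤ x := by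
  by_contra h
  push_neg at h
  set l := s.sort (· ≤ ·) with hl
  set v := l.getD k 0 with hv
  have hcard : Multiset.card t ≤ Multiset.card s := Multiset.card_le_card hts
  have hlen : l.length = Multiset.card s := Multiset.length_sort _
  have hk' : k < l.length := by omega
  have h1 : t.countP (fun x => x < v) = Multiset.card t :=
    Multiset.countP_eq_card.mpr h
  have h2 : t.countP (fun x => x < v) ≤ s.countP (fun x => x < v) :=
    Multiset.countP_le_of_le _ hts
  have h3 : s.countP (fun x => x < v) = l.countP (fun x => decide (x < v)) := by
    conv_lhs => rw [← Multiset.sort_eq s (· ≤ ·)]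
    rfl
  have h4 := mylem1 l (Multiset.pairwise_sort _ _) k hk'
  rw [← hv] at h4
  omega

section
variable {d : ℕ} {G : Type} [Group G] [Fintype G]

local notation "V" => EuclideanSpace ℝ (Fin d)

theorem mylem3 (U : G →* (V ≃ₗᵢ[ℝ] V)) (g h g' h' : G) (t : ℝ) :
    Module.finrank ℝ (LinearMap.ker
      ((((U g).toLinearEquiv : V →ₗ[ℝ] V).comp (LinearMap.fst ℝ V V)
        - ((U g').toLinearEquiv : V →ₗ[ℝ] V).comp (LinearMap.snd ℝ V V))
        - t • (((U h).toLinearEquiv : V →ₗ[ℝ] V).comp (LinearMap.fst ℝ V V)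
          - ((U h').toLinearEquiv : V →ₗ[ℝ] V).comp (LinearMap.snd ℝ V V))))
      ≤ 2 * d - rankMin U (g * h⁻¹) := by
  set F : ((EuclideanSpace ℝ (Fin d)) × V) →ₗ[ℝ] V :=
    (((U g).toLinearEquiv : V →ₗ[ℝ] V).comp (LinearMap.fst ℝ V V)
        - ((U g').toLinearEquiv : V →ₗ[ℝ] V).comp (LinearMap.snd ℝ V V))
        - t • (((U h).toLinearEquiv : V →ₗ[ℝ] V).comp (LinearMap.fst ℝ V V)
          - ((U h').toLinearEquiv : V →ₗ[ℝ] V).comp (LinearMap.snd ℝ V V)) with hF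
  have hcomp : (((U (g * h⁻¹)).toLinearEquiv : V →ₗ[ℝ] V) - t • LinearMap.id).comp
      ((U h).toLinearEquiv : V →ₗ[ℝ] V) = F.comp (LinearMap.inl ℝ V V) := by
    ext x
    simp only [hF, LinearMap.comp_apply, LinearMap.sub_apply, LinearMap.smul_apply,
      LinearMap.inl_apply, LinearMap.fst_apply, LinearMap.snd_apply, LinearMap.id_apply,
      LinearEquiv.coe_coe, LinearIsometryEquiv.coe_toLinearEquiv, map_zero, sub_zero,
      smul_zero]
    have : (U (g * h⁻¹)) ((U h) x) = (U g) x := by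
      have h1 : (U (g * h⁻¹) * U h) x = (U (g * h⁻¹)) ((U h) x) := rfl
      rw [← h1, ← map_mul, inv_mul_cancel_right]
    rw [this]
  have hrm : rankMin U (g * h⁻¹) ≤ Module.finrank ℝ (LinearMap.range
      (((U (g * h⁻¹)).toLinearEquiv : V →ₗ[ℝ] V) - t • LinearMap.id)) :=
    Nat.sInf_le ⟨t, rfl⟩
  have hsurj : LinearMap.range ((U h).toLinearEquiv : V →ₗ[ℝ] V) = ⊤ :=
    LinearMap.range_eq_top.mpr (U h).toLinearEquiv.surjective
  have hr1 : LinearMap.range ((((U (g * h⁻¹)).toLinearEquiv : V →ₗ[ℝ] V)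
      - t • LinearMap.id).comp ((U h).toLinearEquiv : V →ₗ[ℝ] V))
      = LinearMap.range (((U (g * h⁻¹)).toLinearEquiv : V →ₗ[ℝ] V) - t • LinearMap.id) :=
    LinearMap.range_comp_of_range_eq_top _ hsurj
  rw [hcomp] at hr1
  have hr2 : LinearMap.range (F.comp (LinearMap.inl ℝ V V)) ≤ LinearMap.range F :=
    LinearMap.range_comp_le_range _ _
  have hmono : Module.finrank ℝ (LinearMap.range (F.comp (LinearMap.inl ℝ V V)))
      ≤ Module.finrank ℝ (LinearMap.range F) := Submodule.finrank_mono hr2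
  rw [← hr1] at hrm
  have hrn := LinearMap.finrank_range_add_finrank_ker F
  have hdim : Module.finrank ℝ ((EuclideanSpace ℝ (Fin d)) × V) = 2 * d := by
    rw [Module.finrank_prod, finrank_euclideanSpace_fin]; ring
  rw [hdim] at hrn
  omega


end

/-- for `n`-tuples `a, b` of pairwise distinct group elements, the set
`Γ³ = {(x,y) : ∃ c ∈ E_G^{n−1}, U_{a(1)}x − U_{b(1)}y − c_i(U_{a(i+1)}x − U_{b(i+1)}y) = 0 ∀i}`,
where `E_G` is the set of real eigenvalues of the `U_g`, is a finite union of linear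
subspaces of `V × V`, each of dimension at most `p_n = 2d − γ_{N−n+1}`. -/
theorem stmt15 {d : ℕ} (hd : 2 ≤ d) {G : Type} [Group G] [Fintype G] [DecidableEq G]
    (U : G →* (EuclideanSpace ℝ (Fin d) ≃ₗᵢ[ℝ] EuclideanSpace ℝ (Fin d)))
    (n : ℕ) (hn2 : 2 ≤ n) (hnN : n ≤ Fintype.card G - 1)
    (a b : Fin n → G) (ha : Function.Injective a) (hb : Function.Injective b) :
    ∃ (k : ℕ) (Ws : Fin k → Submodule ℝ (EuclideanSpace ℝ (Fin d) × EuclideanSpace ℝ (Fin d))),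
      (∀ i, Module.finrank ℝ (Ws i) ≤ 2 * d - (gammaSorted U).getD (n - 2) 0) ∧
      {z : EuclideanSpace ℝ (Fin d) × EuclideanSpace ℝ (Fin d) |
        ∃ c : Fin (n - 1) → ℝ,
          (∀ i, c i ∈ {t : ℝ | ∃ g : G, ∃ v : EuclideanSpace ℝ (Fin d),
            v ≠ 0 ∧ (U g) v = t • v}) ∧
          ∀ i : Fin (n - 1),
            (U (a ⟨0, by omega⟩)) z.1 - (U (b ⟨0, by omega⟩)) z.2
              - c i • ((U (a ⟨i.1 + 1, by have := i.isLt; omega⟩)) z.1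
                - (U (b ⟨i.1 + 1, by have := i.isLt; omega⟩)) z.2) = 0}
        = ⋃ i, (Ws i : Set (EuclideanSpace ℝ (Fin d) × EuclideanSpace ℝ (Fin d))) := by
  
  classical
  set E : Set ℝ := {t : ℝ | ∃ g : G, ∃ v : EuclideanSpace ℝ (Fin d), v ≠ 0 ∧ (U g) v = t • v} with hE
  let i0 : Fin n := ⟨0, by omega⟩
  let isucc : Fin (n-1) → Fin n := fun i => ⟨i.1 + 1, by have := i.isLt; omega⟩
  let f : ℝ → Fin (n-1) → (((EuclideanSpace ℝ (Fin d)) × (EuclideanSpace ℝ (Fin d))) →ₗ[ℝ] (EuclideanSpace ℝ (Fin d))) := fun t i =>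
    (((U (a i0)).toLinearEquiv : (EuclideanSpace ℝ (Fin d)) →ₗ[ℝ] (EuclideanSpace ℝ (Fin d))).comp (LinearMap.fst ℝ (EuclideanSpace ℝ (Fin d)) (EuclideanSpace ℝ (Fin d)))
      - ((U (b i0)).toLinearEquiv : (EuclideanSpace ℝ (Fin d)) →ₗ[ℝ] (EuclideanSpace ℝ (Fin d))).comp (LinearMap.snd ℝ (EuclideanSpace ℝ (Fin d)) (EuclideanSpace ℝ (Fin d))))
      - t • (((U (a (isucc i))).toLinearEquiv : (EuclideanSpace ℝ (Fin d)) →ₗ[ℝ] (EuclideanSpace ℝ (Fin d))).comp (LinearMap.fst ℝ (EuclideanSpace ℝ (Fin d)) (EuclideanSpace ℝ (Fin d)))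
        - ((U (b (isucc i))).toLinearEquiv : (EuclideanSpace ℝ (Fin d)) →ₗ[ℝ] (EuclideanSpace ℝ (Fin d))).comp (LinearMap.snd ℝ (EuclideanSpace ℝ (Fin d)) (EuclideanSpace ℝ (Fin d))))
  have hf_apply : ∀ (t : ℝ) (i : Fin (n-1)) (z : (EuclideanSpace ℝ (Fin d)) × (EuclideanSpace ℝ (Fin d))), f t i z =
      (U (a i0)) z.1 - (U (b i0)) z.2
        - t • ((U (a (isucc i))) z.1 - (U (b (isucc i))) z.2) := by
    intro t i z
    simp [f, LinearMap.sub_apply, LinearMap.smul_apply, LinearMap.comp_apply]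
  let coeff : Bool → ℝ := fun s => if s then 1 else -1
  let K : (Fin (n-1) → ℝ) → Submodule ℝ ((EuclideanSpace ℝ (Fin d)) × (EuclideanSpace ℝ (Fin d))) := fun t => ⨅ i, LinearMap.ker (f (t i) i)
  let W : (Fin (n-1) → Bool) → Submodule ℝ ((EuclideanSpace ℝ (Fin d)) × (EuclideanSpace ℝ (Fin d))) := fun c =>
    if (∀ i, coeff (c i) ∈ E) then K (fun i => coeff (c i)) else ⊥
  -- 1 is an eigenvalue
  have hone : (1:ℝ) ∈ E := by
    refine ⟨1, EuclideanSpace.single (⟨0, by omega⟩ : Fin d) (1:ℝ), ?_, ?_⟩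
    · intro h
      have := congrArg (fun v => v (⟨0, by omega⟩ : Fin d)) h
      simp [EuclideanSpace.single_apply] at this
    · simp [map_one]
  -- the group elements attached to the constraints
  let gmap : Fin (n-1) → G := fun i => a i0 * (a (isucc i))⁻¹
  have hginj : Function.Injective gmap := by
    intro i j hij
    have h1 : a (isucc i) = a (isucc j) := by
      have := mul_left_cancel hij
      exact inv_injective this
    have h2 := ha h1
    have : i.1 + 1 = j.1 + 1 := congrArg Fin.val h2
    exact Fin.ext (by omega)
  have hne1 : ∀ i, gmap i ≠ 1 := by
    intro i h
    have h1 : a i0 = a (isucc i) := by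
      rw [mul_inv_eq_one] at h; exact h
    have := congrArg Fin.val (ha h1)
    simp [i0, isucc] at this
  -- the dimension bound for the kernels
  have hKbound : ∀ t : Fin (n-1) → ℝ,
      Module.finrank ℝ (K t) ≤ 2 * d - (gammaSorted U).getD (n - 2) 0 := by
    intro t
    set s : Multiset ℕ := ((Finset.univ.filter fun g : G => g ≠ 1).val.map (rankMin U)) with hs
    have hgs : gammaSorted U = s.sort (· ≤ ·) := rfl
    set Mg : Multiset G := (Finset.univ.val : Multiset (Fin (n-1))).map gmap with hMg
    have hnodup : Mg.Nodup := Multiset.Nodup.map hginj Finset.univ.nodup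
    have hsubset : Mg ⊆ (Finset.univ.filter fun g : G => g ≠ 1).val := by
      intro x hx
      obtain ⟨i, _, rfl⟩ := Multiset.mem_map.mp hx
      rw [Finset.mem_val, Finset.mem_filter]
      exact ⟨Finset.mem_univ _, hne1 i⟩
    have hle : Mg ≤ (Finset.univ.filter fun g : G => g ≠ 1).val :=
      (Multiset.le_iff_subset hnodup).mpr hsubset
    have hle' : Mg.map (rankMin U) ≤ s := Multiset.map_le_map hle
    have hcard : Multiset.card (Mg.map (rankMin U)) = n - 1 := by
      simp [hMg]
    have hk : n - 2 < Multiset.card (Mg.map (rankMin U)) := by omega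
    obtain ⟨x, hxt, hvx⟩ := mylem2 s (Mg.map (rankMin U)) hle' (n-2) hk
    obtain ⟨g0, hg0, rfl⟩ := Multiset.mem_map.mp hxt
    obtain ⟨i, _, rfl⟩ := Multiset.mem_map.mp hg0
    have h1 : K t ≤ LinearMap.ker (f (t i) i) := iInf_le _ i
    have h2 : Module.finrank ℝ (K t) ≤ Module.finrank ℝ (LinearMap.ker (f (t i) i)) :=
      Submodule.finrank_mono h1
    have h3 := mylem3 U (a i0) (a (isucc i)) (b i0) (b (isucc i)) (t i)
    have h4 : Module.finrank ℝ (LinearMap.ker (f (t i) i)) ≤ 2 * d - rankMin U (gmap i) := h3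
    rw [hgs]
    have h5 : 2 * d - rankMin U (gmap i) ≤ 2 * d - (s.sort (· ≤ ·)).getD (n-2) 0 :=
      Nat.sub_le_sub_left hvx _
    omega
  -- assemble
  obtain ⟨k, ⟨e⟩⟩ : ∃ k : ℕ, Nonempty ((Fin (n-1) → Bool) ≃ Fin k) :=
    ⟨Fintype.card _, ⟨Fintype.equivFin _⟩⟩
  refine ⟨k, fun i => W (e.symm i), ?_, ?_⟩
  · intro i
    by_cases hcond : ∀ j, coeff ((e.symm i) j) ∈ E
    · simp only [W]
      exact (congrArg (fun S : Submodule ℝ _ => Module.finrank ℝ S) (if_pos hcond : W (e.symm i) = K _)).le.trans (hKbound _)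
    · simp only [W]
      exact (congrArg (fun S : Submodule ℝ _ => Module.finrank ℝ S) (if_neg hcond : W (e.symm i) = ⊥)).le.trans (by simp)
  · have hre : (⋃ i, (W (e.symm i)
        : Set ((EuclideanSpace ℝ (Fin d)) × (EuclideanSpace ℝ (Fin d))))) = ⋃ c, (W c : Set ((EuclideanSpace ℝ (Fin d)) × (EuclideanSpace ℝ (Fin d)))) :=
      e.symm.surjective.iUnion_comp (fun c => (W c : Set ((EuclideanSpace ℝ (Fin d)) × (EuclideanSpace ℝ (Fin d)))))
    rw [hre]
    ext z
    simp only [Set.mem_setOf_eq, Set.mem_iUnion, SetLike.mem_coe]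
    constructor
    · rintro ⟨c, hcE, hceq⟩
      have habs : ∀ i, c i = 1 ∨ c i = -1 := by
        intro i
        obtain ⟨g, v, hv0, hgv⟩ := hcE i
        have h1 : ‖(U g) v‖ = ‖v‖ := (U g).norm_map v
        rw [hgv, norm_smul] at h1
        have hv : ‖v‖ ≠ 0 := norm_ne_zero_iff.mpr hv0
        have h2 : ‖c i‖ = 1 := by
          have := mul_right_cancel₀ hv (h1.trans (one_mul ‖v‖).symm)
          exact this
        rw [Real.norm_eq_abs] at h2
        exact (abs_eq zero_le_one).mp h2
      let cb : Fin (n-1) → Bool := fun i => decide (c i = 1)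
      have hcoeff : ∀ i, coeff (cb i) = c i := by
        intro i
        rcases habs i with h | h
        · simp [cb, coeff, h]
        · have hf : cb i = false := by simp [cb, h]; norm_num
          rw [hf, h]
          norm_num [coeff]
      refine ⟨cb, ?_⟩
      have hcond : ∀ i, coeff (cb i) ∈ E := fun i => (hcoeff i) ▸ hcE i
      simp only [W]
      rw [if_pos hcond, Submodule.mem_iInf]
      intro i
      simp only [LinearMap.mem_ker, hf_apply, hcoeff]
      exact hceq i
    · rintro ⟨c, hz⟩
      by_cases hcond : ∀ i, coeff (c i) ∈ E
      · simp only [W] at hz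
        rw [if_pos hcond, Submodule.mem_iInf] at hz
        refine ⟨fun i => coeff (c i), hcond, fun i => ?_⟩
        have := hz i
        rw [LinearMap.mem_ker, hf_apply] at this
        exact this
      · simp only [W] at hz
        rw [if_neg hcond, Submodule.mem_bot] at hz
        subst hz
        exact ⟨fun _ => 1, fun i => hone, fun i => by simp⟩
end
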